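/- Suppose that for every atom A whose arguments are elements of the domain D there exists a query Q with Set(Q) = {A}. Then every filter Δ that is DN for a clause r is also DNlog for r. -/

import Mathlib

/- A semantic formalization of CLP(X) queries, clauses, derivation steps,
   filters and derivation-neutrality, following Payet & Mesnard. -/

namespace CLP

variable {V D Pr : Type}

/-- A (semantic) term: its evaluation under every valuation. -/
abbrev Trm (V D : Type) := (V → D) → D
/-- A (semantic) constraint: its truth value under every valuation. -/
abbrev Cns (V D : Type) := (V → D) → Prop

/-- The term consisting of a single variable. -/
def varT (x : V) : Trm V D := fun v => v x

/-- An atom whose arguments are domain elements. -/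
structure Atom (D Pr : Type) where
  pred : Pr
  args : List D

/-- A query ⟨p(t̃) | d⟩. -/
structure Query (V D Pr : Type) where
  pred : Pr
  args : List (Trm V D)
  constr : Cns V D

/-- The set of atoms described by a query: Set(⟨p(t̃) | d⟩) = {p([t̃]_v) | D ⊨_v d}. -/
def Query.descSet (Q : Query V D Pr) : Set (Atom D Pr) :=
  { A | ∃ v : V → D, Q.constr v ∧ A = ⟨Q.pred, Q.args.map (fun t => t v)⟩ }

/-- Applying a renaming (a bijection on variables) to a query. -/
def Query.rename (γ : V ≃ V) (Q : Query V D Pr) : Query V D Pr :=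
  ⟨Q.pred, Q.args.map (fun t v => t (v ∘ γ)), fun v => Q.constr (v ∘ γ)⟩

/-- A term only depends on (is supported by) the variables in `S`. -/
def Trm.supp (t : Trm V D) (S : Set V) : Prop :=
  ∀ v w : V → D, (∀ x ∈ S, v x = w x) → t v = t w

/-- A constraint only depends on (is supported by) the variables in `S`. -/
def Cns.supp (c : Cns V D) (S : Set V) : Prop :=
  ∀ v w : V → D, (∀ x ∈ S, v x = w x) → (c v ↔ c w)

/-- All the variables of the query lie in `S`. -/
def Query.suppBy (Q : Query V D Pr) (S : Set V) : Prop :=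
  (∀ t ∈ Q.args, Trm.supp t S) ∧ Cns.supp Q.constr S

/-- The query has finitely many variables (as every syntactic query does). -/
def Query.finSupp (Q : Query V D Pr) : Prop := ∃ S : Finset V, Q.suppBy ↑S

/-- The constraint s̃ = t̃ (componentwise equality of two sequences of terms). -/
def EqArgs (a b : List (Trm V D)) (v : V → D) : Prop :=
  a.length = b.length ∧ ∀ pr ∈ a.zip b, pr.1 v = pr.2 v

/-- A binary clause H ← c ◇ B. -/
structure Clause (V D Pr : Type) where
  hpred : Pr
  hargs : List (Trm V D)
  constr : Cns V D
  bpred : Pr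
  bargs : List (Trm V D)

/-- The query ⟨H | c⟩. -/
def Clause.headQuery (r : Clause V D Pr) : Query V D Pr := ⟨r.hpred, r.hargs, r.constr⟩
/-- The query ⟨B | c⟩. -/
def Clause.bodyQuery (r : Clause V D Pr) : Query V D Pr := ⟨r.bpred, r.bargs, r.constr⟩

/-- Applying a renaming to a clause (producing a variant of the clause). -/
def Clause.rename (γ : V ≃ V) (r : Clause V D Pr) : Clause V D Pr :=
  ⟨r.hpred, r.hargs.map (fun t v => t (v ∘ γ)), fun v => r.constr (v ∘ γ),
   r.bpred, r.bargs.map (fun t v => t (v ∘ γ))⟩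

/-- All the variables of the clause lie in `S`. -/
def Clause.suppBy (r : Clause V D Pr) (S : Set V) : Prop :=
  (∀ t ∈ r.hargs ++ r.bargs, Trm.supp t S) ∧ Cns.supp r.constr S

/-- The clause has finitely many variables. -/
def Clause.finSupp (r : Clause V D Pr) : Prop := ∃ S : Finset V, r.suppBy ↑S

/-- The constraint s̃ = ũ ∧ c ∧ d of the derived query, where the input clause is
    r' = p(s̃) ← c ◇ q(t̃) and the current query is Q = ⟨p(ũ) | d⟩. -/
def stepCns (r' : Clause V D Pr) (Q : Query V D Pr) : Cns V D :=
  fun v => EqArgs r'.hargs Q.args v ∧ r'.constr v ∧ Q.constr v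

/-- A derivation step Q ⟹_r Q₁: there is a variant r' of r variable-disjoint from Q
    (the input clause) such that the constraint s̃ = ũ ∧ c ∧ d is satisfiable, and
    Q₁ = ⟨q(t̃) | s̃ = ũ ∧ c ∧ d⟩. -/
def Step (r : Clause V D Pr) (Q Q₁ : Query V D Pr) : Prop :=
  ∃ γ : V ≃ V, ∃ S S' : Set V,
    Q.suppBy S ∧ (r.rename γ).suppBy S' ∧ Disjoint S S' ∧
    Q.pred = r.hpred ∧
    (∃ v, stepCns (r.rename γ) Q v) ∧
    Q₁ = ⟨(r.rename γ).bpred, (r.rename γ).bargs, stepCns (r.rename γ) Q⟩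

/-- Q₀ loops w.r.t. the program `Prog`: there is an infinite derivation of Prog ∪ {Q₀}. -/
def Loops (Prog : Set (Clause V D Pr)) (Q₀ : Query V D Pr) : Prop :=
  ∃ Qs : ℕ → Query V D Pr, Qs 0 = Q₀ ∧ ∀ n, ∃ r ∈ Prog, Step r (Qs n) (Qs (n + 1))

/-- Projection of a sequence onto a set of (0-based) positions, in increasing order. -/
def projArgs {α : Type} (s : Finset ℕ) (l : List α) : List α :=
  ((s.filter (· < l.length)).sort (· ≤ ·)).filterMap (fun i => l[i]?)

/-- Projection of a query on a set of positions τ. -/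
def Query.proj (τ : Pr → Finset ℕ) (Q : Query V D Pr) : Query V D Pr :=
  ⟨Q.pred, projArgs (τ Q.pred) Q.args, Q.constr⟩

/-- Projection of a query on the complementary set of positions τ̄. -/
def Query.coproj (τ : Pr → Finset ℕ) (Q : Query V D Pr) : Query V D Pr :=
  ⟨Q.pred, projArgs (Finset.range Q.args.length \ τ Q.pred) Q.args, Q.constr⟩

/-- A filter Δ = (τ, δ): a set of positions together with, for each predicate,
    a query over the projected predicate whose constraint is satisfiable. -/
structure PFilter (V D Pr : Type) where
  pos : Pr → Finset ℕ
  delta : Pr → Query V D Pr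
  delta_pred : ∀ p, (delta p).pred = p
  delta_sat : ∀ p, ∃ v, (delta p).constr v

/-- Q satisfies Δ when Set(Q|_τ) ⊆ Set(δ(rel(Q))). -/
def PFilter.Satisfies (Δ : PFilter V D Pr) (Q : Query V D Pr) : Prop :=
  (Q.proj Δ.pos).descSet ⊆ (Δ.delta Q.pred).descSet

/-- Q' is Δ-more general than Q. -/
def PFilter.MoreGen (Δ : PFilter V D Pr) (Q' Q : Query V D Pr) : Prop :=
  (Q.coproj Δ.pos).descSet ⊆ (Q'.coproj Δ.pos).descSet ∧ Δ.Satisfies Q'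

/-- Δ is derivation neutral (DN) for the clause r. -/
def PFilter.DN (Δ : PFilter V D Pr) (r : Clause V D Pr) : Prop :=
  ∀ Q Q₁ : Query V D Pr, Q.finSupp → Step r Q Q₁ →
    Δ.Satisfies Q₁ ∧
    ∀ Q' : Query V D Pr, Q'.finSupp → Δ.MoreGen Q' Q →
      ∃ Q₁', Step r Q' Q₁' ∧ Δ.MoreGen Q₁' Q₁

/-- sat(ũ, Q): taking a fresh variant of Q and existentially quantifying its variables,
    the values of ũ can be matched with the arguments of Q while its constraint holds. -/
def satC (us : List (Trm V D)) (Q : Query V D Pr) : Cns V D :=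
  fun v => ∃ w : V → D, us.length = Q.args.length ∧
    (∀ pr ∈ us.zip Q.args, pr.1 v = pr.2 w) ∧ Q.constr w

/-- First DNlog condition: D ⊨ c → ∀_{X̃|τ(p)} [sat(X̃|τ(p), δ(p)) → ∃_𝒴 c],
    with 𝒴 = Ỹ|τ(q) ∪ local_vars(r). -/
def DNlog1 (Δ : PFilter V D Pr) (p q : Pr) (Xs Ys : List V) (L : Set V) (c : Cns V D) : Prop :=
  ∀ v : V → D, c v →
    ∀ v' : V → D, (∀ x : V, x ∉ projArgs (Δ.pos p) Xs → v' x = v x) →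
      satC ((projArgs (Δ.pos p) Xs).map varT) (Δ.delta p) v' →
      ∃ w : V → D, (∀ x : V, x ∉ projArgs (Δ.pos q) Ys → x ∉ L → w x = v' x) ∧ c w

/-- Second DNlog condition: D ⊨ c → sat(Ỹ|τ(q), δ(q)). -/
def DNlog2 (Δ : PFilter V D Pr) (q : Pr) (Ys : List V) (c : Cns V D) : Prop :=
  ∀ v : V → D, c v → satC ((projArgs (Δ.pos q) Ys).map varT) (Δ.delta q) v

/-- Δ is DNlog for the clause p(X̃) ← c ◇ q(Ỹ) with local variables L. -/
def DNlog (Δ : PFilter V D Pr) (p q : Pr) (Xs Ys : List V) (L : Set V) (c : Cns V D) : Prop :=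
  DNlog1 Δ p q Xs Ys L c ∧ DNlog2 Δ q Ys c

end CLP
/-! For a solution `v` of `c`, DN is applied to the ground query `⟨p(v X̃) | true⟩`, whose
resolvent by the clause has the instance `q(v Ỹ)` at `v`; that the resolvent satisfies Δ gives
`sat(Ỹ|τ(q), δ(q))` at `v`. For the first condition, a solution `v'` of `sat(X̃|τ(p), δ(p))` that
agrees with `v` off `X̃|τ(p)` makes `⟨p(v' X̃) | true⟩` Δ-more general than `⟨p(v X̃) | true⟩`.
DN yields a resolvent of it whose co-projection describes `q(v Ỹ)|τ̄(q)`; the valuation behind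
that atom solves `c`, agrees with `v'` on `X̃` and with `v` on `Ỹ|τ̄(q)`, and patched with `v'`
off the variables of the clause it witnesses `∃_𝒴 c`. -/

namespace CLP

variable {V D Pr : Type}

section projArgs

variable {α : Type} {s : Finset ℕ} {l : List α} {a : α}

lemma projArgs_map {β : Type} (f : α → β) :
    projArgs s (l.map f) = (projArgs s l).map f := by
  unfold projArgs
  rw [List.length_map, List.map_filterMap]
  congr 1
  funext i
  simp [List.getElem?_map]

lemma mem_projArgs : a ∈ projArgs s l ↔ ∃ i ∈ s, ∃ h : i < l.length, l[i] = a := by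
  simp only [projArgs, List.mem_filterMap, Finset.mem_sort, Finset.mem_filter,
    List.getElem?_eq_some_iff]
  exact exists_congr fun i => ⟨fun ⟨⟨hi, _⟩, h⟩ => ⟨hi, h⟩, fun ⟨hi, hl, h⟩ => ⟨⟨hi, hl⟩, hl, h⟩⟩

lemma mem_of_mem_projArgs (h : a ∈ projArgs s l) : a ∈ l := by
  obtain ⟨i, -, hi, rfl⟩ := mem_projArgs.1 h
  exact List.getElem_mem hi

lemma mem_projArgs_compl_of_notMem (ha : a ∈ l) (hs : a ∉ projArgs s l) :
    a ∈ projArgs (Finset.range l.length \ s) l := by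
  obtain ⟨i, hi, rfl⟩ := List.mem_iff_getElem.1 ha
  have his : i ∉ s := fun h => hs (mem_projArgs.2 ⟨i, h, hi, rfl⟩)
  exact mem_projArgs.2 ⟨i, by simp [hi, his], hi, rfl⟩

lemma notMem_projArgs_of_mem_projArgs_compl (hl : l.Nodup)
    (ha : a ∈ projArgs (Finset.range l.length \ s) l) : a ∉ projArgs s l := by
  obtain ⟨i, hi, hil, rfl⟩ := mem_projArgs.1 ha
  rintro h
  obtain ⟨j, hj, hjl, hji⟩ := mem_projArgs.1 h
  rw [hl.getElem_inj_iff] at hji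
  exact (Finset.mem_sdiff.1 hi).2 (hji ▸ hj)

end projArgs

lemma length_eq_and_forall_zip_iff_map_eq {α β γ : Type} {f : α → γ} {g : β → γ}
    {l₁ : List α} {l₂ : List β} :
    (l₁.length = l₂.length ∧ ∀ pr ∈ l₁.zip l₂, f pr.1 = g pr.2) ↔ l₁.map f = l₂.map g := by
  rw [← List.forall₂_eq_eq_eq, List.forall₂_map_left_iff, List.forall₂_map_right_iff,
    List.forall₂_iff_zip]
  simp only [Prod.forall]

lemma map_varT_eval (xs : List V) (v : V → D) : (xs.map varT).map (fun t => t v) = xs.map v := by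
  rw [List.map_map]
  rfl

lemma eqArgs_iff {a b : List (Trm V D)} {v : V → D} :
    EqArgs a b v ↔ a.map (fun t => t v) = b.map (fun t => t v) := by
  unfold EqArgs
  exact length_eq_and_forall_zip_iff_map_eq (f := fun t : Trm V D => t v)
    (g := fun t : Trm V D => t v)

def Query.inst (Q : Query V D Pr) (v : V → D) : Atom D Pr := ⟨Q.pred, Q.args.map fun t => t v⟩

def Atom.proj (τ : Pr → Finset ℕ) (A : Atom D Pr) : Atom D Pr :=
  ⟨A.pred, projArgs (τ A.pred) A.args⟩

def Atom.coproj (τ : Pr → Finset ℕ) (A : Atom D Pr) : Atom D Pr :=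
  ⟨A.pred, projArgs (Finset.range A.args.length \ τ A.pred) A.args⟩

def Atom.toQuery (A : Atom D Pr) : Query V D Pr := ⟨A.pred, A.args.map fun a _ => a, fun _ => True⟩

section Query

variable (τ : Pr → Finset ℕ) {Q : Query V D Pr} {A : Atom D Pr} {v : V → D}

lemma Query.mem_descSet : A ∈ Q.descSet ↔ ∃ v, Q.constr v ∧ A = Q.inst v :=
  Iff.rfl

lemma Query.inst_mem_descSet (h : Q.constr v) : Q.inst v ∈ Q.descSet :=
  ⟨v, h, rfl⟩

lemma Query.proj_inst : (Q.proj τ).inst v = (Q.inst v).proj τ := by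
  simp only [Query.inst, Query.proj, Atom.proj, projArgs_map]

lemma Query.coproj_inst : (Q.coproj τ).inst v = (Q.inst v).coproj τ := by
  simp only [Query.inst, Query.coproj, Atom.coproj, projArgs_map, List.length_map]

lemma Query.inst_proj_mem_descSet (h : Q.constr v) : (Q.inst v).proj τ ∈ (Q.proj τ).descSet :=
  Query.proj_inst τ ▸ Query.inst_mem_descSet h

lemma Query.inst_coproj_mem_descSet (h : Q.constr v) :
    (Q.inst v).coproj τ ∈ (Q.coproj τ).descSet :=
  Query.coproj_inst τ ▸ Query.inst_mem_descSet h

lemma satC_map_varT_iff {xs : List V} :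
    satC (xs.map varT) Q v ↔ (⟨Q.pred, xs.map v⟩ : Atom D Pr) ∈ Q.descSet := by
  refine exists_congr fun w => ?_
  have h := length_eq_and_forall_zip_iff_map_eq (f := fun t : Trm V D => t v)
    (g := fun t => t w) (l₁ := xs.map varT) (l₂ := Q.args)
  beta_reduce at h
  rw [← and_assoc, h, map_varT_eval, and_comm]
  simp only [Atom.mk.injEq, true_and]

end Query

section Atom

variable (τ : Pr → Finset ℕ) (A : Atom D Pr)

lemma Atom.proj_map (p : Pr) (xs : List V) (v : V → D) :
    (⟨p, xs.map v⟩ : Atom D Pr).proj τ = ⟨p, (projArgs (τ p) xs).map v⟩ := by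
  simp only [Atom.proj, projArgs_map]

lemma Atom.coproj_map (p : Pr) (xs : List V) (v : V → D) :
    (⟨p, xs.map v⟩ : Atom D Pr).coproj τ =
      ⟨p, (projArgs (Finset.range xs.length \ τ p) xs).map v⟩ := by
  simp only [Atom.coproj, projArgs_map, List.length_map]

lemma Atom.toQuery_inst (v : V → D) : (A.toQuery : Query V D Pr).inst v = A := by
  simp [Atom.toQuery, Query.inst, Function.comp_def]

lemma Atom.descSet_toQuery_subset : (A.toQuery : Query V D Pr).descSet ⊆ {A} := by
  rintro _ ⟨v, -, rfl⟩
  exact A.toQuery_inst v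

lemma Atom.toQuery_proj : (A.toQuery : Query V D Pr).proj τ = (A.proj τ).toQuery := by
  simp only [Atom.toQuery, Query.proj, Atom.proj, projArgs_map]

lemma Atom.toQuery_coproj : (A.toQuery : Query V D Pr).coproj τ = (A.coproj τ).toQuery := by
  simp only [Atom.toQuery, Query.coproj, Atom.coproj, projArgs_map, List.length_map]

lemma Atom.toQuery_suppBy_empty : (A.toQuery : Query V D Pr).suppBy ∅ := by
  refine ⟨?_, fun _ _ _ => Iff.rfl⟩
  intro t ht u w _
  obtain ⟨a, -, rfl⟩ := List.mem_map.1 ht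
  rfl

lemma Atom.toQuery_finSupp : (A.toQuery : Query V D Pr).finSupp :=
  ⟨∅, by simpa using A.toQuery_suppBy_empty⟩

end Atom

lemma PFilter.moreGen_toQuery (Δ : PFilter V D Pr) {A B : Atom D Pr}
    (hco : A.coproj Δ.pos = B.coproj Δ.pos) (hB : B.proj Δ.pos ∈ (Δ.delta B.pred).descSet) :
    Δ.MoreGen B.toQuery A.toQuery := by
  refine ⟨by rw [Atom.toQuery_coproj, Atom.toQuery_coproj, hco], ?_⟩
  rw [PFilter.Satisfies, Atom.toQuery_proj]
  exact (Atom.descSet_toQuery_subset _).trans (Set.singleton_subset_iff.2 hB)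

lemma Clause.rename_refl (r : Clause V D Pr) : r.rename (Equiv.refl V) = r := by
  simp [Clause.rename]

lemma Clause.suppBy_univ (r : Clause V D Pr) : r.suppBy Set.univ :=
  ⟨fun _ _ u w h => by rw [funext fun x => h x trivial],
   fun u w h => by rw [funext fun x => h x trivial]⟩

lemma stepCns_rename_toQuery (r : Clause V D Pr) (γ : V ≃ V) (A : Atom D Pr) (u : V → D) :
    stepCns (r.rename γ) A.toQuery u ↔ stepCns r A.toQuery (u ∘ γ) := by
  simp only [stepCns, eqArgs_iff, Clause.rename, List.map_map, Atom.toQuery, Function.comp_def]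

/-- A ground query has no variables, so the clause itself can serve as the input clause. -/
lemma step_toQuery (r : Clause V D Pr) {A : Atom D Pr} (hA : A.pred = r.hpred) {v : V → D}
    (hv : stepCns r A.toQuery v) :
    Step r A.toQuery ⟨r.bpred, r.bargs, stepCns r A.toQuery⟩ :=
  ⟨Equiv.refl V, ∅, Set.univ, A.toQuery_suppBy_empty,
    by simpa only [r.rename_refl] using r.suppBy_univ, Set.empty_disjoint _, hA,
    ⟨v, by rwa [r.rename_refl]⟩, by rw [r.rename_refl]⟩

lemma Step.exists_inst_of_toQuery {r : Clause V D Pr} {A : Atom D Pr} {Q₁ : Query V D Pr}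
    (h : Step r A.toQuery Q₁) {u : V → D} (hu : Q₁.constr u) :
    ∃ u', stepCns r A.toQuery u' ∧ Q₁.inst u = r.bodyQuery.inst u' := by
  obtain ⟨γ, -, -, -, -, -, -, -, rfl⟩ := h
  refine ⟨u ∘ γ, (stepCns_rename_toQuery r γ A u).1 hu, ?_⟩
  simp only [Query.inst, Clause.bodyQuery, Clause.rename, List.map_map]
  rfl

lemma Cns.supp.exists_eqOn_compl {c : Cns V D} {S T : Set V} (hc : c.supp S) {u v : V → D}
    (hu : c u) (h : ∀ x ∈ S \ T, u x = v x) : ∃ w, Set.EqOn w v Tᶜ ∧ c w := by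
  classical
  refine ⟨S.piecewise u v, fun x hx => ?_,
    (hc _ _ fun x hx => (Set.piecewise_eq_of_mem _ _ _ hx).symm).1 hu⟩
  by_cases hxS : x ∈ S
  · rw [Set.piecewise_eq_of_mem _ _ _ hxS]
    exact h x ⟨hxS, hx⟩
  · exact Set.piecewise_eq_of_notMem _ _ _ hxS

def Clause.ofVars (p : Pr) (Xs : List V) (c : Cns V D) (q : Pr) (Ys : List V) : Clause V D Pr :=
  ⟨p, Xs.map varT, c, q, Ys.map varT⟩

section ofVars

variable {p q : Pr} {Xs Ys : List V} {c : Cns V D}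

lemma stepCns_ofVars_toQuery_iff {p' : Pr} {as : List D} {u : V → D} :
    stepCns (Clause.ofVars p Xs c q Ys) (⟨p', as⟩ : Atom D Pr).toQuery u ↔ Xs.map u = as ∧ c u := by
  simp [stepCns, eqArgs_iff, Clause.ofVars, varT, Atom.toQuery, Function.comp_def]

lemma Clause.ofVars_bodyQuery_inst (u : V → D) :
    (Clause.ofVars p Xs c q Ys).bodyQuery.inst u = ⟨q, Ys.map u⟩ := by
  simp only [Query.inst, Clause.bodyQuery, Clause.ofVars, map_varT_eval]

lemma exists_step_ofVars {v : V → D} (hc : c v) :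
    ∃ Q₁, Step (Clause.ofVars p Xs c q Ys) (⟨p, Xs.map v⟩ : Atom D Pr).toQuery Q₁ ∧
      Q₁.constr v ∧ Q₁.inst v = ⟨q, Ys.map v⟩ :=
  have hv := stepCns_ofVars_toQuery_iff.2 ⟨rfl, hc⟩
  ⟨_, step_toQuery _ rfl hv, hv, Clause.ofVars_bodyQuery_inst v⟩

variable {Δ : PFilter V D Pr}

theorem PFilter.DN.dnlog2 (hdn : Δ.DN (Clause.ofVars p Xs c q Ys)) : DNlog2 Δ q Ys c := by
  intro v hc
  obtain ⟨Q₁, hstep, hv, hinst⟩ := exists_step_ofVars hc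
  have hmem := (hdn _ _ (Atom.toQuery_finSupp _) hstep).1 (Q₁.inst_proj_mem_descSet Δ.pos hv)
  rw [hinst, Atom.proj_map, show Q₁.pred = q from congrArg Atom.pred hinst] at hmem
  rwa [satC_map_varT_iff, Δ.delta_pred]

lemma PFilter.moreGen_toQuery_of_satC (hXs : Xs.Nodup) {v v' : V → D}
    (hv' : ∀ x ∉ projArgs (Δ.pos p) Xs, v' x = v x)
    (hsat : satC ((projArgs (Δ.pos p) Xs).map varT) (Δ.delta p) v') :
    Δ.MoreGen (⟨p, Xs.map v'⟩ : Atom D Pr).toQuery (⟨p, Xs.map v⟩ : Atom D Pr).toQuery := by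
  refine Δ.moreGen_toQuery ?_ ?_
  · rw [Atom.coproj_map, Atom.coproj_map]
    congr 1
    exact List.map_congr_left fun x hx =>
      (hv' x (notMem_projArgs_of_mem_projArgs_compl hXs hx)).symm
  · rw [satC_map_varT_iff, Δ.delta_pred] at hsat
    rwa [Atom.proj_map]

theorem PFilter.DN.dnlog1 {L : Set V} (hXs : Xs.Nodup)
    (hsupp : c.supp ({x | x ∈ Xs} ∪ {x | x ∈ Ys} ∪ L)) (hdn : Δ.DN (Clause.ofVars p Xs c q Ys)) :
    DNlog1 Δ p q Xs Ys L c := by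
  intro v hc v' hv' hsat
  obtain ⟨Q₁, hstep, hv, hinst⟩ := exists_step_ofVars hc
  obtain ⟨Q₁', hstep', hgen'⟩ := (hdn _ _ (Atom.toQuery_finSupp _) hstep).2 _
    (Atom.toQuery_finSupp _) (Δ.moreGen_toQuery_of_satC hXs hv' hsat)
  obtain ⟨u, hu, hinst_eq⟩ :=
    Query.mem_descSet.1 <| hgen'.1 (hinst ▸ Q₁.inst_coproj_mem_descSet Δ.pos hv)
  obtain ⟨u', hu', hinst'⟩ := hstep'.exists_inst_of_toQuery hu
  rw [stepCns_ofVars_toQuery_iff] at hu'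
  rw [Query.coproj_inst, hinst', Clause.ofVars_bodyQuery_inst, Atom.coproj_map,
    Atom.coproj_map] at hinst_eq
  have hYs : ∀ y ∈ projArgs (Finset.range Ys.length \ Δ.pos q) Ys, v y = u' y :=
    List.map_inj_left.1 (congrArg Atom.args hinst_eq)
  have hagree : ∀ x ∈ ({x | x ∈ Xs} ∪ {x | x ∈ Ys} ∪ L) \ ({y | y ∈ projArgs (Δ.pos q) Ys} ∪ L),
      u' x = v' x := by
    rintro x ⟨(hxX | hxY) | hxL, hxT⟩
    · exact List.map_inj_left.1 hu'.1 x hxX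
    · by_cases hxX : x ∈ Xs
      · exact List.map_inj_left.1 hu'.1 x hxX
      have hxq : x ∉ projArgs (Δ.pos q) Ys := fun h => hxT (Or.inl h)
      rw [← hYs x (mem_projArgs_compl_of_notMem hxY hxq)]
      exact (hv' x fun h => hxX (mem_of_mem_projArgs h)).symm
    · exact absurd (Or.inr hxL) hxT
  obtain ⟨w, hw, hcw⟩ := hsupp.exists_eqOn_compl hu'.2 hagree
  exact ⟨w, fun x hxq hxL => hw (by simp [hxq, hxL]), hcw⟩

end ofVars

end CLP

theorem dn_implies_dnlog_general {D Pr : Type} (Δ : CLP.PFilter ℕ D Pr) (p q : Pr)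
    (Xs Ys : List ℕ) (L : Finset ℕ) (c : CLP.Cns ℕ D)
    (hnodup : (Xs ++ Ys).Nodup)
    (hsupp : CLP.Cns.supp c (↑Xs.toFinset ∪ ↑Ys.toFinset ∪ ↑L : Set ℕ))
    (r : CLP.Clause ℕ D Pr)
    (hr : r = ⟨p, Xs.map CLP.varT, c, q, Ys.map CLP.varT⟩)
    (hdn : Δ.DN r) :
    CLP.DNlog Δ p q Xs Ys (↑L) c := by
  subst hr
  rw [List.coe_toFinset, List.coe_toFinset] at hsupp
  exact ⟨hdn.dnlog1 (List.nodup_append.1 hnodup).1 hsupp, hdn.dnlog2⟩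

theorem dn_implies_dnlog {D Pr : Type} (Δ : CLP.PFilter ℕ D Pr) (p q : Pr)
    (Xs Ys : List ℕ) (L : Finset ℕ) (c : CLP.Cns ℕ D)
    (hnodup : (Xs ++ Ys).Nodup)
    (hL : ∀ x ∈ L, x ∉ Xs ∧ x ∉ Ys)
    (hsupp : CLP.Cns.supp c (↑Xs.toFinset ∪ ↑Ys.toFinset ∪ ↑L : Set ℕ))
    (r : CLP.Clause ℕ D Pr)
    (hr : r = ⟨p, Xs.map CLP.varT, c, q, Ys.map CLP.varT⟩)
    (hatoms : ∀ A : CLP.Atom D Pr, ∃ Q : CLP.Query ℕ D Pr, Q.finSupp ∧ Q.descSet = {A})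
    (hdn : Δ.DN r) :
    CLP.DNlog Δ p q Xs Ys (↑L) c :=
  dn_implies_dnlog_general Δ p q Xs Ys L c hnodup hsupp r hr hdn
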